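/- arXiv:2004.09315 — 4 statements merged into one kernel-verified Lean document; each statement's English description precedes it below -/
import Mathlib

section
/- For γ ∈ (0,1), λ > 0, θ > 0, the Legendre transform of κ(y) = λ(θ^γ − (θ−y)^γ) (for y ≤ θ, +∞ otherwise) satisfies, for all x > 0, κ*(x) = x·(θ − (x/(λγ))^{1/(γ−1)}) − λ·(θ^γ − (x/(λγ))^{γ/(γ−1)}). -/
/-- For γ ∈ (0,1), λ > 0, θ > 0, the Legendre transform of
κ(y) = λ(θ^γ − (θ−y)^γ) (y ≤ θ; +∞ otherwise) satisfies, for x > 0,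
κ*(x) = x(θ − (x/(λγ))^{1/(γ−1)}) − λ(θ^γ − (x/(λγ))^{γ/(γ−1)}). -/
theorem stmt_8 (γ l θ : ℝ) (hγ0 : 0 < γ) (hγ1 : γ < 1) (hl : 0 < l) (hθ : 0 < θ) :
    ∀ x : ℝ, 0 < x →
      (⨆ y : ℝ, ((x * y : ℝ) : EReal) -
          (if y ≤ θ then ((l * (θ ^ γ - (θ - y) ^ γ) : ℝ) : EReal) else ⊤))
        = ((x * (θ - (x / (l * γ)) ^ (1 / (γ - 1)))
            - l * (θ ^ γ - (x / (l * γ)) ^ (γ / (γ - 1))) : ℝ) : EReal) := by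
  intro x hx
  have hγ1' : γ - 1 ≠ 0 := by linarith
  set c := x / (l * γ) with hc
  have hcpos : 0 < c := div_pos hx (mul_pos hl hγ0)
  set zs := c ^ (1 / (γ - 1)) with hzs
  have hzspos : 0 < zs := Real.rpow_pos_of_pos hcpos _
  have hzsg1 : zs ^ (γ - 1) = c := by
    rw [hzs, ← Real.rpow_mul hcpos.le, one_div_mul_cancel hγ1', Real.rpow_one]
  have hzsg : zs ^ γ = c ^ (γ / (γ - 1)) := by
    rw [hzs, ← Real.rpow_mul hcpos.le]
    congr 1
    field_simp
  have hzz : zs ^ (γ - 1) * zs = zs ^ γ := by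
    rw [Real.rpow_sub hzspos, Real.rpow_one]
    field_simp
  have hxc : l * γ * zs ^ (γ - 1) = x := by
    rw [hzsg1, hc]; field_simp
  have key : ∀ z : ℝ, 0 ≤ z → l * z ^ γ - x * z ≤ l * zs ^ γ - x * zs := by
    intro z hz
    have young : (z / zs) ^ γ * (1 : ℝ) ^ (1 - γ) ≤ γ * (z / zs) + (1 - γ) * 1 :=
      Real.geom_mean_le_arith_mean2_weighted hγ0.le (by linarith)
        (div_nonneg hz hzspos.le) zero_le_one (by ring)
    rw [Real.one_rpow, mul_one, mul_one, Real.div_rpow hz hzspos.le] at young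
    have h2 : z ^ γ ≤ γ * (z / zs) * zs ^ γ + (1 - γ) * zs ^ γ := by
      have hpos : (0:ℝ) < zs ^ γ := Real.rpow_pos_of_pos hzspos _
      have := mul_le_mul_of_nonneg_right young hpos.le
      calc z ^ γ = z ^ γ / zs ^ γ * zs ^ γ := by field_simp
        _ ≤ (γ * (z / zs) + (1 - γ)) * zs ^ γ := this
        _ = γ * (z / zs) * zs ^ γ + (1 - γ) * zs ^ γ := by ring
    have h3 : γ * (z / zs) * zs ^ γ = γ * z * zs ^ (γ - 1) := by
      rw [← hzz]; field_simp
    rw [h3] at h2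
    have hxz : x * z = l * γ * zs ^ (γ - 1) * z := by rw [hxc]
    have hxzs : x * zs = l * γ * zs ^ γ := by
      rw [← hxc, mul_assoc, hzz]
    rw [hxz, hxzs]
    nlinarith [mul_le_mul_of_nonneg_left h2 hl.le]
  have hMeq : (x * (θ - c ^ (1 / (γ - 1))) - l * (θ ^ γ - c ^ (γ / (γ - 1))) : ℝ)
      = x * (θ - zs) - l * (θ ^ γ - zs ^ γ) := by rw [hzsg, hzs]
  rw [hMeq]
  apply le_antisymm
  · apply iSup_le
    intro y
    by_cases hy : y ≤ θ
    · simp only [hy, if_true]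
      rw [← EReal.coe_sub, EReal.coe_le_coe_iff]
      have := key (θ - y) (by linarith)
      nlinarith [this]
    · simp only [hy, if_false, EReal.sub_top]
      exact bot_le
  · refine le_iSup_of_le (θ - zs) ?_
    have hy : θ - zs ≤ θ := by linarith
    simp only [hy, if_true]
    rw [← EReal.coe_sub, EReal.coe_le_coe_iff]
    have : θ - (θ - zs) = zs := by ring
    rw [this]
end

section
/- For γ ∈ (0,1), λ > 0, θ > 0, define Ψ(x) = θ − (λγx)^{1/(1−γ)} + λx((λγx)^{γ/(1−γ)} − θ^γ) for x ≥ 0 and Ψ(x) = +∞ for x < 0. Then Ψ(x) = x·κ*(1/x) for all x > 0, where κ* is the Legendre transform of κ(y) = λ(θ^γ − (θ−y)^γ) (y ≤ θ). -/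
/-- For γ ∈ (0,1), λ > 0, θ > 0, with
Ψ(x) = θ − (λγx)^{1/(1−γ)} + λx((λγx)^{γ/(1−γ)} − θ^γ) (x ≥ 0),
one has Ψ(x) = x·κ*(1/x) for all x > 0, where κ* is the Legendre transform of
κ(y) = λ(θ^γ − (θ−y)^γ) (y ≤ θ; +∞ otherwise). -/
theorem stmt_11 (γ l θ : ℝ) (hγ0 : 0 < γ) (hγ1 : γ < 1) (hl : 0 < l) (hθ : 0 < θ) :
    ∀ x : ℝ, 0 < x →
      ((θ - (l * γ * x) ^ (1 / (1 - γ))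
          + l * x * ((l * γ * x) ^ (γ / (1 - γ)) - θ ^ γ) : ℝ) : EReal)
        = (x : EReal) *
          (⨆ y : ℝ, (((1 / x) * y : ℝ) : EReal) -
            (if y ≤ θ then ((l * (θ ^ γ - (θ - y) ^ γ) : ℝ) : EReal) else ⊤)) := by
  intro x hx
  have h1γ : 0 < 1 - γ := by linarith
  set A := l * γ * x with hA_def
  have hA : 0 < A := by positivity
  set t : ℝ := A ^ (1 / (1 - γ)) with ht_def
  have htpos : 0 < t := Real.rpow_pos_of_pos hA _
  have htγ : t ^ γ = A ^ (γ / (1 - γ)) := by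
    rw [ht_def, ← Real.rpow_mul hA.le, one_div, inv_mul_eq_div]
  have hc : l * γ * t ^ (γ - 1) = 1 / x := by
    rw [ht_def, ← Real.rpow_mul hA.le]
    have he : 1 / (1 - γ) * (γ - 1) = -1 := by field_simp; ring
    rw [he, Real.rpow_neg_one, hA_def]
    field_simp
  have hct : (1 / x) * t = l * γ * t ^ γ := by
    rw [← hc]
    have : t ^ (γ - 1) * t = t ^ γ := by
      rw [← Real.rpow_add_one htpos.ne']
      ring_nf
    nlinarith [this]
  set S : ℝ := (1 / x) * (θ - t) - l * (θ ^ γ - t ^ γ) with hS_def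
  have key : ∀ s : ℝ, 0 ≤ s →
      l * s ^ γ - (1 / x) * s ≤ l * t ^ γ - (1 / x) * t := by
    intro s hs
    have geom := Real.geom_mean_le_arith_mean2_weighted (le_of_lt hγ0)
      (le_of_lt h1γ) hs htpos.le (by ring)
    have hpos : (0:ℝ) ≤ l * t ^ (γ - 1) := by positivity
    have h2 : l * t ^ (γ - 1) * (s ^ γ * t ^ (1 - γ)) ≤
        l * t ^ (γ - 1) * (γ * s + (1 - γ) * t) :=
      mul_le_mul_of_nonneg_left geom hpos
    have e1 : t ^ (γ - 1) * t ^ (1 - γ) = 1 := by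
      rw [← Real.rpow_add htpos]; norm_num
    have e2 : t ^ (γ - 1) * t = t ^ γ := by
      rw [← Real.rpow_add_one htpos.ne']; ring_nf
    have hL : l * t ^ (γ - 1) * (s ^ γ * t ^ (1 - γ)) = l * s ^ γ := by
      rw [show l * t ^ (γ - 1) * (s ^ γ * t ^ (1 - γ))
          = l * s ^ γ * (t ^ (γ - 1) * t ^ (1 - γ)) from by ring, e1, mul_one]
    have hR : l * t ^ (γ - 1) * (γ * s + (1 - γ) * t)
        = (1 / x) * s + l * (1 - γ) * t ^ γ := by
      rw [show l * t ^ (γ - 1) * (γ * s + (1 - γ) * t)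
          = (l * γ * t ^ (γ - 1)) * s + l * (1 - γ) * (t ^ (γ - 1) * t) from by ring,
        hc, e2]
    rw [hL, hR] at h2
    nlinarith [h2, hct]
  have hsup : (⨆ y : ℝ, (((1 / x) * y : ℝ) : EReal) -
      (if y ≤ θ then ((l * (θ ^ γ - (θ - y) ^ γ) : ℝ) : EReal) else ⊤))
      = (S : EReal) := by
    apply le_antisymm
    · apply iSup_le
      intro y
      by_cases hy : y ≤ θ
      · rw [if_pos hy, ← EReal.coe_sub, EReal.coe_le_coe_iff]
        have hk := key (θ - y) (by linarith)
        rw [hS_def]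
        nlinarith [hk]
      · rw [if_neg hy, EReal.sub_top]
        exact bot_le
    · have hle := le_iSup (fun y : ℝ => (((1 / x) * y : ℝ) : EReal) -
        (if y ≤ θ then ((l * (θ ^ γ - (θ - y) ^ γ) : ℝ) : EReal) else ⊤)) (θ - t)
      refine le_trans ?_ hle
      simp only [if_pos (by linarith : θ - t ≤ θ)]
      rw [← EReal.coe_sub, EReal.coe_le_coe_iff]
      apply le_of_eq
      rw [hS_def]
      ring_nf
  rw [hsup, ← EReal.coe_mul, EReal.coe_eq_coe_iff]
  rw [hS_def, ← htγ]
  field_simp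
  ring
end

section
/- For γ ∈ (0,1), λ > 0, θ > 0, define Λ(y) = (θ^γ + y/λ)^{1/γ} − θ for y ≥ −λθ^γ and Λ(y) = −θ for y < −λθ^γ. Then sup_{y∈ℝ}(xy − Λ(y)) = Ψ(x) for all x ≥ 0, where Ψ(x) = θ − (λγx)^{1/(1−γ)} + λx((λγx)^{γ/(1−γ)} − θ^γ). -/
/-- Key concavity/Young inequality: for `a, u ≥ 0`,
`a*u - u^(1/γ) ≤ a*(γ*a)^(γ/(1-γ)) - (γ*a)^(1/(1-γ))`. -/
lemma key_ineq (γ : ℝ) (hγ0 : 0 < γ) (hγ1 : γ < 1) (a u : ℝ) (ha : 0 ≤ a) (hu : 0 ≤ u) :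
    a * u - u ^ (1/γ : ℝ) ≤ a * (γ*a) ^ (γ/(1-γ) : ℝ) - (γ*a) ^ (1/(1-γ) : ℝ) := by
  have h1γ : 0 < 1 - γ := by linarith
  rcases eq_or_lt_of_le ha with rfl | hapos
  · simp only [mul_zero, zero_mul]
    have h1 : (0:ℝ) ^ (γ/(1-γ) : ℝ) = 0 := Real.zero_rpow (by positivity)
    have h2 : (0:ℝ) ^ (1/(1-γ) : ℝ) = 0 := Real.zero_rpow (by positivity)
    have h3 : 0 ≤ u ^ (1/γ : ℝ) := Real.rpow_nonneg hu _
    rw [h2]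
    have h4 : (0:ℝ) * (0:ℝ) ^ (γ/(1-γ) : ℝ) = 0 := by rw [h1]; ring
    linarith
  · have hpq : Real.HolderConjugate (1/(1-γ)) (1/γ) := by
      refine Real.holderConjugate_iff.mpr ⟨?_, ?_⟩
      · rw [lt_div_iff₀ h1γ]; linarith
      · rw [one_div, one_div, inv_inv, inv_inv]; ring
    have hbase : 0 ≤ a * γ ^ (γ:ℝ) := by positivity
    have hb : 0 ≤ u * γ ^ (-γ:ℝ) := by positivity
    have hY := Real.young_inequality_of_nonneg hbase hb hpq
    -- simplify the b-term: (u * γ^(-γ))^(1/γ) / (1/γ) = u^(1/γ)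
    have hbterm : (u * γ ^ (-γ:ℝ)) ^ (1/γ : ℝ) / (1/γ) = u ^ (1/γ : ℝ) := by
      rw [Real.mul_rpow hu (by positivity), ← Real.rpow_mul hγ0.le]
      have : (-γ) * (1/γ) = -1 := by field_simp
      rw [this, Real.rpow_neg_one]
      field_simp
    -- simplify the product: (a*γ^γ) * (u*γ^(-γ)) = a*u
    have hprod : (a * γ ^ (γ:ℝ)) * (u * γ ^ (-γ:ℝ)) = a * u := by
      have : γ ^ (γ:ℝ) * γ ^ (-γ:ℝ) = 1 := by
        rw [← Real.rpow_add hγ0]; simp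
      calc (a * γ ^ (γ:ℝ)) * (u * γ ^ (-γ:ℝ)) = (a*u) * (γ ^ (γ:ℝ) * γ ^ (-γ:ℝ)) := by ring
        _ = a*u := by rw [this, mul_one]
    -- simplify the a-term
    have haterm : (a * γ ^ (γ:ℝ)) ^ (1/(1-γ):ℝ) / (1/(1-γ))
        = a * (γ*a) ^ (γ/(1-γ) : ℝ) - (γ*a) ^ (1/(1-γ) : ℝ) := by
      have hga : 0 < γ * a := by positivity
      rw [Real.mul_rpow ha (by positivity), ← Real.rpow_mul hγ0.le,
        Real.mul_rpow hγ0.le ha, Real.mul_rpow hγ0.le ha]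
      have e4 : a * (γ ^ (γ/(1-γ):ℝ) * a ^ (γ/(1-γ):ℝ))
          = γ ^ (γ/(1-γ):ℝ) * a ^ (1/(1-γ):ℝ) := by
        rw [show a * (γ ^ (γ/(1-γ):ℝ) * a ^ (γ/(1-γ):ℝ))
            = γ ^ (γ/(1-γ):ℝ) * (a ^ (1:ℝ) * a ^ (γ/(1-γ):ℝ)) by
          rw [Real.rpow_one]; ring]
        rw [← Real.rpow_add hapos]
        congr 1
        field_simp
        ring_nf
      have e5 : γ ^ (1/(1-γ):ℝ) = γ ^ (γ/(1-γ):ℝ) * γ := by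
        rw [show (1/(1-γ):ℝ) = γ/(1-γ) + 1 by field_simp; ring, Real.rpow_add hγ0, Real.rpow_one]
      have e6 : γ * (1/(1-γ):ℝ) = γ/(1-γ) := by ring
      rw [e6, e4, e5]
      field_simp
    rw [hprod, hbterm, haterm] at hY
    linarith

/-- For γ ∈ (0,1), λ > 0, θ > 0, with Λ(y) = (θ^γ + y/λ)^{1/γ} − θ for y ≥ −λθ^γ
and Λ(y) = −θ for y < −λθ^γ, one has sup_y (xy − Λ(y)) = Ψ(x) for all x ≥ 0,
where Ψ(x) = θ − (λγx)^{1/(1−γ)} + λx((λγx)^{γ/(1−γ)} − θ^γ). -/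
theorem stmt_14 (γ l θ : ℝ) (hγ0 : 0 < γ) (hγ1 : γ < 1) (hl : 0 < l) (hθ : 0 < θ) :
    ∀ x : ℝ, 0 ≤ x →
      (⨆ y : ℝ, x * y -
          (if -(l * θ ^ γ) ≤ y then (θ ^ γ + y / l) ^ (1 / γ) - θ else -θ))
        = θ - (l * γ * x) ^ (1 / (1 - γ))
            + l * x * ((l * γ * x) ^ (γ / (1 - γ)) - θ ^ γ) := by
  intro x hx
  have h1γ : 0 < 1 - γ := by linarith
  have ha : (0:ℝ) ≤ l * x := by positivity
  have hbase : l * γ * x = γ * (l * x) := by ring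
  set a : ℝ := l * x with hadef
  set M : ℝ := θ - (l * γ * x) ^ (1 / (1 - γ))
      + l * x * ((l * γ * x) ^ (γ / (1 - γ)) - θ ^ γ) with hM
  have hM' : M = a * (γ*a) ^ (γ/(1-γ) : ℝ) - (γ*a) ^ (1/(1-γ) : ℝ) - a * θ^γ + θ := by
    rw [hM, hbase]; ring
  -- pointwise upper bound
  have bound : ∀ y : ℝ, x * y -
      (if -(l * θ ^ γ) ≤ y then (θ ^ γ + y / l) ^ (1 / γ) - θ else -θ) ≤ M := by
    intro y
    by_cases h : -(l * θ ^ γ) ≤ y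
    · rw [if_pos h]
      set u : ℝ := θ ^ γ + y / l with hu
      have hu0 : 0 ≤ u := by
        have : -(θ^γ) ≤ y / l := by
          rw [le_div_iff₀ hl]; linarith
        simp only [hu]; linarith
      have hxy : x * y = a * u - a * θ^γ := by
        have : y = l * (u - θ^γ) := by
          rw [hu]; field_simp; ring
        rw [this, hadef]; ring
      have hk := key_ineq γ hγ0 hγ1 a u ha hu0
      rw [hM', hxy]
      linarith
    · rw [if_neg h]
      push_neg at h
      have h1 : x * y ≤ x * (-(l * θ^γ)) := mul_le_mul_of_nonneg_left h.le hx
      have hk := key_ineq γ hγ0 hγ1 a 0 ha le_rfl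
      have h0 : (0:ℝ) ^ (1/γ : ℝ) = 0 := Real.zero_rpow (by positivity)
      rw [mul_zero, h0, sub_zero] at hk
      rw [hM']
      have : x * (-(l * θ^γ)) = -(a * θ^γ) := by rw [hadef]; ring
      linarith [this ▸ h1]
  -- the maximizer
  set ystar : ℝ := l * ((γ*a) ^ (γ/(1-γ) : ℝ) - θ^γ) with hys
  have hattain : x * ystar -
      (if -(l * θ ^ γ) ≤ ystar then (θ ^ γ + ystar / l) ^ (1 / γ) - θ else -θ) = M := by
    have hge : -(l * θ ^ γ) ≤ ystar := by
      have : (0:ℝ) ≤ (γ*a) ^ (γ/(1-γ) : ℝ) := Real.rpow_nonneg (by positivity) _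
      rw [hys]
      nlinarith
    rw [if_pos hge]
    have hu : θ ^ γ + ystar / l = (γ*a) ^ (γ/(1-γ) : ℝ) := by
      rw [hys]; field_simp; ring
    have hpow : ((γ*a) ^ (γ/(1-γ) : ℝ)) ^ (1/γ : ℝ) = (γ*a) ^ (1/(1-γ) : ℝ) := by
      rw [← Real.rpow_mul (by positivity)]
      congr 1
      field_simp
    rw [hu, hpow, hM']
    rw [hys, hadef]
    ring
  apply le_antisymm
  · exact ciSup_le bound
  · have hbdd : BddAbove (Set.range fun y : ℝ => x * y -
        (if -(l * θ ^ γ) ≤ y then (θ ^ γ + y / l) ^ (1 / γ) - θ else -θ)) := by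
      refine ⟨M, ?_⟩
      rintro _ ⟨y, rfl⟩
      exact bound y
    calc M = _ := hattain.symm
      _ ≤ _ := le_ciSup hbdd ystar
end

section
/- Let κ : (−∞, θ] → ℝ be strictly increasing and continuous with κ(0) = 0, and let κ*(x) = sup_{y ≤ θ}(xy − κ(y)). Then for all x > 0, x·κ*(1/x) = sup_{z ∈ I} (xz − Ψ̃(z)) where Ψ̃(z) = −κ^{−1}(−z) and I = (−κ(θ), −lim_{y→−∞}κ(y)); i.e. x·κ*(1/x) is the Legendre transform of Ψ̃ evaluated at x. -/
lemma ereal_mul_iSup {c : ℝ} (hc : 0 < c) (f : ℝ → EReal) :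
    (c : EReal) * ⨆ y, f y = ⨆ y, (c : EReal) * f y := by
  have hc' : (0 : EReal) < (c : EReal) := EReal.coe_pos.2 hc
  have hct : (c : EReal) ≠ ⊤ := EReal.coe_ne_top c
  apply le_antisymm
  · rw [mul_comm, ← EReal.le_div_iff_mul_le hc' hct]
    apply iSup_le
    intro y
    rw [EReal.le_div_iff_mul_le hc' hct, mul_comm]
    exact le_iSup (fun y => (c : EReal) * f y) y
  · apply iSup_le
    intro y
    exact mul_le_mul_of_nonneg_left (le_iSup f y) hc'.le

/-- Let κ be strictly increasing and continuous on (−∞, θ] with κ(0) = 0 and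
lim_{y→−∞} κ(y) = L < 0 (possibly −∞), and let ψ(z) = −κ⁻¹(−z) on
I = (−κ(θ), −L). Then for all x > 0,
x·κ*(1/x) = sup_{z ∈ I} (xz − ψ(z)), where κ*(u) = sup_{y ≤ θ}(uy − κ(y)). -/
theorem stmt_17 (θ : ℝ) (hθ : 0 ≤ θ) (κ ψ : ℝ → ℝ) (L : EReal)
    (hmono : StrictMonoOn κ (Set.Iic θ)) (hcont : ContinuousOn κ (Set.Iic θ))
    (hκ0 : κ 0 = 0)
    (hL : Filter.Tendsto (fun y : ℝ => (κ y : EReal)) Filter.atBot (nhds L))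
    (hLneg : L < 0)
    (hψ : ∀ z : ℝ, -κ θ < z → (z : EReal) < -L → -ψ z ≤ θ ∧ κ (-ψ z) = -z) :
    ∀ x : ℝ, 0 < x →
      (x : EReal) *
          (⨆ y : ℝ, if y ≤ θ then (((1 / x) * y - κ y : ℝ) : EReal) else ⊥)
        = ⨆ z : ℝ, if -κ θ < z ∧ (z : EReal) < -L
            then ((x * z - ψ z : ℝ) : EReal) else ⊥ := by
  intro x hx
  have hx0 : x ≠ 0 := ne_of_gt hx
  rw [ereal_mul_iSup hx]
  -- rewrite each multiplied term
  have hterm : ∀ y : ℝ,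
      (x : EReal) * (if y ≤ θ then (((1 / x) * y - κ y : ℝ) : EReal) else ⊥)
        = if y ≤ θ then ((y - x * κ y : ℝ) : EReal) else ⊥ := by
    intro y
    by_cases h : y ≤ θ
    · simp only [h, if_true, ← EReal.coe_mul]
      congr 1
      field_simp
    · simp only [h, if_false]
      exact EReal.coe_mul_bot_of_pos hx
  simp only [hterm]
  -- L < κ y for all y ≤ θ
  have hLlt : ∀ y : ℝ, y ≤ θ → L < (κ y : EReal) := by
    intro y hy
    have h1 : L ≤ (κ (y - 1) : EReal) := by
      apply le_of_tendsto hL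
      filter_upwards [Filter.eventually_le_atBot (y - 1)] with y' hy'
      exact EReal.coe_le_coe_iff.2 (hmono.monotoneOn (Set.mem_Iic.mpr (by linarith))
        (Set.mem_Iic.mpr (by linarith)) hy')
    exact h1.trans_lt (EReal.coe_lt_coe_iff.2 (hmono (Set.mem_Iic.mpr (by linarith))
      (Set.mem_Iic.mpr hy) (by linarith)))
  -- the key pointwise bound for y < θ
  have key : ∀ y : ℝ, y < θ → ((y - x * κ y : ℝ) : EReal)
      ≤ ⨆ z : ℝ, if -κ θ < z ∧ (z : EReal) < -L
          then ((x * z - ψ z : ℝ) : EReal) else ⊥ := by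
    intro y hy
    set z := -κ y with hz
    have hc1 : -κ θ < z := by
      have := hmono (Set.mem_Iic.mpr hy.le) (Set.mem_Iic.mpr le_rfl) hy
      simp only [hz]; linarith
    have hc2 : (z : EReal) < -L := by
      rw [hz, EReal.coe_neg, EReal.neg_lt_neg_iff]
      exact hLlt y hy.le
    obtain ⟨h1, h2⟩ := hψ z hc1 hc2
    have hψz : ψ z = -y := by
      have : -ψ z = y := hmono.injOn h1 (le_of_lt hy) (by rw [h2, hz, neg_neg])
      linarith
    have : ((y - x * κ y : ℝ) : EReal) = if -κ θ < z ∧ (z : EReal) < -L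
        then ((x * z - ψ z : ℝ) : EReal) else ⊥ := by
      rw [if_pos ⟨hc1, hc2⟩]
      exact congrArg Real.toEReal (by rw [hψz, hz]; ring)
    rw [this]
    exact le_iSup (fun z : ℝ => if -κ θ < z ∧ (z : EReal) < -L
        then ((x * z - ψ z : ℝ) : EReal) else ⊥) z
  apply le_antisymm
  · apply iSup_le
    intro y
    by_cases h : y ≤ θ
    · rw [if_pos h]
      rcases lt_or_eq_of_le h with hlt | heq
      · exact key y hlt
      · subst heq
        -- use continuity: value at θ is a limit from the left
        have hcont2 : Filter.Tendsto (fun y' : ℝ => ((y' - x * κ y' : ℝ) : EReal))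
            (nhdsWithin y (Set.Iio y)) (nhds ((y - x * κ y : ℝ) : EReal)) := by
          apply Filter.Tendsto.comp (Continuous.tendsto continuous_coe_real_ereal _)
          have h1 : ContinuousWithinAt (fun y' : ℝ => y' - x * κ y') (Set.Iic y) y := by
            exact (continuousWithinAt_id.sub
              ((continuousWithinAt_const).mul (hcont y (Set.mem_Iic.mpr le_rfl))))
          exact h1.mono Set.Iio_subset_Iic_self |>.tendsto
        refine le_of_tendsto hcont2 ?_
        filter_upwards [self_mem_nhdsWithin] with y' hy'
        exact key y' hy'
    · rw [if_neg h]; exact bot_le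
  · apply iSup_le
    intro z
    by_cases hc : -κ θ < z ∧ (z : EReal) < -L
    · rw [if_pos hc]
      obtain ⟨h1, h2⟩ := hψ z hc.1 hc.2
      set y := -ψ z with hy
      have hκy : κ y = -z := h2
      have : ((x * z - ψ z : ℝ) : EReal) = if y ≤ θ then ((y - x * κ y : ℝ) : EReal) else ⊥ := by
        rw [if_pos h1]
        exact congrArg Real.toEReal (by rw [hκy, hy]; ring)
      rw [this]
      exact le_iSup (fun y : ℝ => if y ≤ θ then ((y - x * κ y : ℝ) : EReal) else ⊥) y
    · rw [if_neg hc]; exact bot_le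
end
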